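/- arXiv:1405.4149 — 2 statements merged into one kernel-verified Lean document; each statement's English description precedes it below -/
import Mathlib

section
/- Let ℓ ≥ 1. For n ∈ ℕ define δ_n := Σ_λ W(λ)², where the sum runs over all weakly decreasing functions λ : {0, 1, …, ℓ} → ℕ with λ(0) = n and λ(ℓ) = 0, and W(λ) := ∏_{0 ≤ i < j ≤ ℓ} (λ(i) − λ(j) + j − i)/(j − i). Then for a real number p > 0, the series Σ_{n ≥ 1} δ_n·n^{−p} converges if and only if p > ℓ(ℓ+2). -/
/-!
Writing `ℓ = k + 1`, a tableau with `λ(0) = n` is determined by its `k` interior values, all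
at most `n`, and each of the `(k+2).choose 2` factors of `W(λ)` lies in `[1, n + 1]`; hence
`δ_n ≤ (n+1)^d` with `d = k + 2 (k+2).choose 2 = ℓ(ℓ+2) - 1`. Conversely, for `n ≥ 3m(k+1)` the
`m^k` tableaux whose interior values are `2m(k - i) + s_i` with `s_i < m` drop by at least
`m (j - i)` between positions `i < j`, so every factor is at least `m + 1` and `δ_n ≥ m^d`.
Thus `δ_n n^{-p} ≍ n^{d - p}`, which is summable iff `d - p < -1`.
-/

/-- The Weyl dimension formula for the irreducible unitary representation of
SU_q(ℓ+1) with highest weight (Young tableau) f : {0, …, ℓ} → ℕ. -/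
noncomputable def weylDim (ℓ : ℕ) (f : Fin (ℓ + 1) → ℕ) : ℝ :=
  ∏ p ∈ Finset.univ.filter (fun p : Fin (ℓ + 1) × Fin (ℓ + 1) => p.1 < p.2),
    (((f p.1 : ℝ) - (f p.2 : ℝ) + ((p.2 : ℕ) : ℝ) - ((p.1 : ℕ) : ℝ)) /
      (((p.2 : ℕ) : ℝ) - ((p.1 : ℕ) : ℝ)))

/-- δ_n = Σ_λ W(λ)², summed over Young tableaux λ with λ(0) = n, λ(ℓ) = 0. -/
noncomputable def deltaDim (ℓ n : ℕ) : ℝ :=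
  ∑ᶠ f ∈ {f : Fin (ℓ + 1) → ℕ | Antitone f ∧ f 0 = n ∧ f (Fin.last ℓ) = 0},
    (weylDim ℓ f) ^ 2

open Finset Filter Asymptotics

def tableaux (ℓ n : ℕ) : Set (Fin (ℓ + 1) → ℕ) :=
  {f | Antitone f ∧ f 0 = n ∧ f (Fin.last ℓ) = 0}

lemma le_of_mem_tableaux {ℓ n : ℕ} {f : Fin (ℓ + 1) → ℕ} (hf : f ∈ tableaux ℓ n)
    (i : Fin (ℓ + 1)) : f i ≤ n :=
  hf.2.1 ▸ hf.1 (Fin.zero_le i)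

lemma tableaux_finite (ℓ n : ℕ) : (tableaux ℓ n).Finite :=
  (Set.finite_Iic fun _ => n).subset fun _ hf i => le_of_mem_tableaux hf i

lemma deltaDim_eq_sum (ℓ n : ℕ) :
    deltaDim ℓ n = ∑ f ∈ (tableaux_finite ℓ n).toFinset, weylDim ℓ f ^ 2 :=
  finsum_mem_eq_finite_toFinset_sum _ (tableaux_finite ℓ n)

lemma card_tableaux_le (k n : ℕ) :
    (tableaux_finite (k + 1) n).toFinset.card ≤ (n + 1) ^ k := by
  have hinj : Set.InjOn (fun f (i : Fin k) => f i.castSucc.succ)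
      ((tableaux_finite (k + 1) n).toFinset : Set (Fin (k + 2) → ℕ)) := by
    intro f hf g hg hfg
    simp only [Set.Finite.coe_toFinset] at hf hg
    funext j
    cases j using Fin.cases with
    | zero => rw [hf.2.1, hg.2.1]
    | succ j =>
      cases j using Fin.lastCases with
      | last => rw [Fin.succ_last, hf.2.2, hg.2.2]
      | cast i => exact congrFun hfg i
  calc _ ≤ (Fintype.piFinset fun _ : Fin k => range (n + 1)).card := by
        refine card_le_card_of_injOn _ (fun f hf => ?_) hinj
        rw [Set.Finite.coe_toFinset] at hf
        simpa [Nat.lt_succ_iff] using fun i => le_of_mem_tableaux hf _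
    _ = (n + 1) ^ k := by simp

lemma weylDim_eq_prod (ℓ : ℕ) (f : Fin (ℓ + 1) → ℕ) :
    weylDim ℓ f = ∏ q ∈ univ.filter (fun q : Fin (ℓ + 1) × Fin (ℓ + 1) => q.1 < q.2),
      (((f q.1 : ℝ) - f q.2) / (((q.2 : ℕ) : ℝ) - (q.1 : ℕ)) + 1) := by
  refine prod_congr rfl fun q hq => ?_
  have : ((q.1 : ℕ) : ℝ) < (q.2 : ℕ) := by simpa using (mem_filter.1 hq).2
  field_simp [sub_ne_zero.2 this.ne']
  ring

lemma weylFactor_nonneg {ℓ : ℕ} {f : Fin (ℓ + 1) → ℕ} (hf : Antitone f)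
    {q : Fin (ℓ + 1) × Fin (ℓ + 1)} (hq : q.1 < q.2) :
    0 ≤ ((f q.1 : ℝ) - f q.2) / (((q.2 : ℕ) : ℝ) - (q.1 : ℕ)) := by
  have hd : ((q.1 : ℕ) : ℝ) < (q.2 : ℕ) := by exact_mod_cast hq
  have hfq : (f q.2 : ℝ) ≤ f q.1 := by exact_mod_cast hf hq.le
  exact div_nonneg (sub_nonneg.2 hfq) (sub_nonneg.2 hd.le)

lemma weylDim_nonneg {ℓ : ℕ} {f : Fin (ℓ + 1) → ℕ} (hf : Antitone f) : 0 ≤ weylDim ℓ f := by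
  rw [weylDim_eq_prod]
  exact prod_nonneg fun q hq => add_nonneg (weylFactor_nonneg hf (mem_filter.1 hq).2) zero_le_one

lemma weylDim_le {ℓ n : ℕ} {f : Fin (ℓ + 1) → ℕ} (hf : Antitone f) (hn : ∀ i, f i ≤ n) :
    weylDim ℓ f ≤ ((n : ℝ) + 1) ^ (ℓ + 1).choose 2 := by
  rw [weylDim_eq_prod]
  calc _ ≤ ∏ q ∈ univ.filter (fun q : Fin (ℓ + 1) × Fin (ℓ + 1) => q.1 < q.2), ((n : ℝ) + 1) := by
        refine prod_le_prod (fun q hq => ?_) (fun q hq => ?_)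
        · exact add_nonneg (weylFactor_nonneg hf (mem_filter.1 hq).2) zero_le_one
        have hlt : q.1 < q.2 := (mem_filter.1 hq).2
        have hd : (1 : ℝ) ≤ ((q.2 : ℕ) : ℝ) - (q.1 : ℕ) := by
          have : (q.1 : ℕ) + 1 ≤ q.2 := hlt
          rw [le_sub_iff_add_le']; exact_mod_cast this
        have hfq : (f q.2 : ℝ) ≤ f q.1 := by exact_mod_cast hf hlt.le
        have h1 := div_le_self (sub_nonneg.2 hfq) hd
        have h2 : (f q.1 : ℝ) ≤ n := by exact_mod_cast hn q.1
        have h3 : (0 : ℝ) ≤ f q.2 := by positivity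
        linarith
    _ = _ := by rw [prod_const, Fintype.card_product_filter_lt, Fintype.card_fin]

def HasGapsAtLeast {n : ℕ} (m : ℕ) (f : Fin n → ℕ) : Prop :=
  ∀ ⦃i j : Fin n⦄, i ≤ j → f j + m * ((j : ℕ) - i) ≤ f i

lemma HasGapsAtLeast.antitone {n m : ℕ} {f : Fin n → ℕ} (hf : HasGapsAtLeast m f) : Antitone f :=
  fun _ _ hij => (Nat.le_add_right _ _).trans (hf hij)

lemma le_weylDim {ℓ m : ℕ} {f : Fin (ℓ + 1) → ℕ} (hf : HasGapsAtLeast m f) :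
    ((m : ℝ) + 1) ^ (ℓ + 1).choose 2 ≤ weylDim ℓ f := by
  rw [weylDim_eq_prod]
  calc _ = ∏ q ∈ univ.filter (fun q : Fin (ℓ + 1) × Fin (ℓ + 1) => q.1 < q.2), ((m : ℝ) + 1) := by
        rw [prod_const, Fintype.card_product_filter_lt, Fintype.card_fin]
    _ ≤ _ := by
        refine prod_le_prod (fun q hq => by positivity) (fun q hq => ?_)
        have hlt : q.1 < q.2 := (mem_filter.1 hq).2
        have hd : ((q.1 : ℕ) : ℝ) < (q.2 : ℕ) := by exact_mod_cast hlt
        have hgap : (f q.2 : ℝ) + m * (((q.2 : ℕ) : ℝ) - (q.1 : ℕ)) ≤ f q.1 := by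
          have := hf hlt.le
          rw [← Nat.cast_sub hlt.le]; exact_mod_cast this
        rw [add_le_add_iff_right, le_div_iff₀ (sub_pos.2 hd)]
        linarith

lemma hasGapsAtLeast_cons {k m a : ℕ} {g : Fin k → ℕ} (hg : HasGapsAtLeast m g)
    (ha : ∀ j : Fin k, g j + m * (j + 1) ≤ a) :
    HasGapsAtLeast m (Fin.cons a g : Fin (k + 1) → ℕ) := by
  intro i j hij
  cases i using Fin.cases with
  | zero =>
    cases j using Fin.cases with
    | zero => simp
    | succ j => simpa using ha j
  | succ i =>
    cases j using Fin.cases with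
    | zero => exact absurd hij (Fin.succ_pos i).not_ge
    | succ j => simpa using hg (Fin.succ_le_succ_iff.1 hij)

lemma hasGapsAtLeast_snoc {k m a : ℕ} {g : Fin k → ℕ} (hg : HasGapsAtLeast m g)
    (ha : ∀ i : Fin k, a + m * (k - i) ≤ g i) :
    HasGapsAtLeast m (Fin.snoc g a : Fin (k + 1) → ℕ) := by
  intro i j hij
  cases j using Fin.lastCases with
  | last =>
    cases i using Fin.lastCases with
    | last => simp
    | cast i => simpa using ha i
  | cast j =>
    cases i using Fin.lastCases with
    | last => exact absurd hij (Fin.castSucc_lt_last j).not_ge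
    | cast i => simpa using hg (Fin.castSucc_le_castSucc_iff.1 hij)

def spacedTableau (k n m : ℕ) (s : Fin k → Fin m) : Fin (k + 2) → ℕ :=
  Fin.cons n (Fin.snoc (fun i : Fin k => 2 * m * (k - i) + s i) 0)

lemma spacedTableau_injective (k n m : ℕ) : Function.Injective (spacedTableau k n m) := by
  intro s t hst
  funext i
  have := congrFun (Fin.snoc_injective2 (Fin.cons_right_injective _ hst)).1 i
  exact Fin.ext (Nat.add_left_cancel this)

lemma hasGapsAtLeast_spacedTableau {k n m : ℕ} (hn : 3 * m * (k + 1) ≤ n) (s : Fin k → Fin m) :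
    HasGapsAtLeast m (spacedTableau k n m s) := by
  have hs := fun i => (s i).isLt
  have hinterior : HasGapsAtLeast m fun i : Fin k => 2 * m * (k - i) + s i := by
    intro i j hij
    rcases hij.lt_or_eq with hij | rfl
    · have hlt : (i : ℕ) < j := hij
      have h1 : 2 * m * (k - i) = 2 * m * (k - j) + 2 * (m * (j - i)) := by
        rw [show k - (i : ℕ) = (k - j) + (j - i) by omega]; ring
      have h2 : m ≤ m * (j - i) := Nat.le_mul_of_pos_right m (by omega)
      have hsj := hs j
      dsimp only
      omega
    · simp
  refine hasGapsAtLeast_cons (hasGapsAtLeast_snoc hinterior fun i => by nlinarith) fun j => ?_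
  cases j using Fin.lastCases with
  | last => simp only [Fin.snoc_last, Fin.val_last, zero_add]; nlinarith
  | cast i =>
    have hsi := hs i
    have hsplit : m * (k - i) + m * (i + 1) = m * (k + 1) := by
      rw [← mul_add]; congr 1; omega
    simp only [Fin.snoc_castSucc, Fin.val_castSucc]
    nlinarith

lemma spacedTableau_mem_tableaux {k n m : ℕ} (hn : 3 * m * (k + 1) ≤ n) (s : Fin k → Fin m) :
    spacedTableau k n m s ∈ tableaux (k + 1) n := by
  refine ⟨(hasGapsAtLeast_spacedTableau hn s).antitone, rfl, ?_⟩
  simp [spacedTableau, ← Fin.succ_last]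

lemma deltaDim_le (k n : ℕ) :
    deltaDim (k + 1) n ≤ ((n : ℝ) + 1) ^ (k + 2 * (k + 2).choose 2) := by
  rw [deltaDim_eq_sum]
  calc _ ≤ (tableaux_finite (k + 1) n).toFinset.card • (((n : ℝ) + 1) ^ (k + 2).choose 2) ^ 2 := by
        refine sum_le_card_nsmul _ _ _ fun f hf => ?_
        rw [Set.Finite.mem_toFinset] at hf
        exact pow_le_pow_left₀ (weylDim_nonneg hf.1) (weylDim_le hf.1 (le_of_mem_tableaux hf)) 2
    _ ≤ ((n : ℝ) + 1) ^ k * (((n : ℝ) + 1) ^ (k + 2).choose 2) ^ 2 := by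
        rw [nsmul_eq_mul]
        gcongr
        exact_mod_cast card_tableaux_le k n
    _ = _ := by ring

lemma pow_le_deltaDim {k n m : ℕ} (hn : 3 * m * (k + 1) ≤ n) :
    (m : ℝ) ^ (k + 2 * (k + 2).choose 2) ≤ deltaDim (k + 1) n := by
  rw [deltaDim_eq_sum]
  calc _ ≤ (univ : Finset (Fin k → Fin m)).card • (((m : ℝ) + 1) ^ (k + 2).choose 2) ^ 2 := by
        simp only [nsmul_eq_mul, card_univ, Fintype.card_fun, Fintype.card_fin, pow_add, pow_mul']
        push_cast
        gcongr
        linarith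
    _ ≤ ∑ s : Fin k → Fin m, weylDim (k + 1) (spacedTableau k n m s) ^ 2 :=
        card_nsmul_le_sum _ _ _ fun s _ =>
          pow_le_pow_left₀ (by positivity) (le_weylDim (hasGapsAtLeast_spacedTableau hn s)) 2
    _ = ∑ f ∈ univ.image (spacedTableau k n m), weylDim (k + 1) f ^ 2 :=
        (sum_image (f := fun f => weylDim (k + 1) f ^ 2)
          fun s _ t _ h => spacedTableau_injective k n m h).symm
    _ ≤ _ := by
        refine sum_le_sum_of_subset_of_nonneg (fun f hf => ?_) fun _ _ _ => sq_nonneg _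
        obtain ⟨s, -, rfl⟩ := mem_image.1 hf
        exact (Set.Finite.mem_toFinset _).2 (spacedTableau_mem_tableaux hn s)

lemma deltaDim_nonneg (ℓ n : ℕ) : 0 ≤ deltaDim ℓ n := by
  rw [deltaDim_eq_sum]
  positivity

lemma deltaDim_isTheta (k : ℕ) :
    (fun n => deltaDim (k + 1) n) =Θ[atTop] fun n => (n : ℝ) ^ (k + 2 * (k + 2).choose 2) := by
  set d := k + 2 * (k + 2).choose 2
  constructor
  · refine IsBigO.of_bound (2 ^ d) (eventually_atTop.2 ⟨1, fun n hn => ?_⟩)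
    have hn' : (1 : ℝ) ≤ n := by exact_mod_cast hn
    rw [Real.norm_of_nonneg (deltaDim_nonneg _ n), norm_pow, Real.norm_natCast, ← mul_pow]
    exact (deltaDim_le k n).trans (pow_le_pow_left₀ (by positivity) (by linarith) d)
  · refine IsBigO.of_bound ((6 * (k + 1)) ^ d) (eventually_atTop.2 ⟨3 * (k + 1), fun n hn => ?_⟩)
    set m := n / (3 * (k + 1))
    have hm : 1 ≤ m := (Nat.one_le_div_iff (by positivity)).2 hn
    have hmn : 3 * m * (k + 1) ≤ n := by
      have : m * (3 * (k + 1)) ≤ n := Nat.div_mul_le_self n _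
      linarith
    have hnm : n ≤ 6 * (k + 1) * m := by
      have : n < 3 * (k + 1) * (m + 1) := Nat.lt_mul_div_succ n (by positivity)
      nlinarith
    rw [Real.norm_of_nonneg (deltaDim_nonneg _ n), norm_pow, Real.norm_natCast]
    calc (n : ℝ) ^ d ≤ ((6 * (k + 1) : ℝ) * m) ^ d := by
          gcongr; exact_mod_cast hnm
      _ = (6 * (k + 1) : ℝ) ^ d * (m : ℝ) ^ d := mul_pow _ _ _
      _ ≤ _ := by gcongr; exact pow_le_deltaDim hmn

theorem stmt_11_general (ℓ : ℕ) (hℓ : 1 ≤ ℓ) (p : ℝ) :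
    Summable (fun n : ℕ => deltaDim ℓ (n + 1) * ((n + 1 : ℕ) : ℝ) ^ (-p)) ↔
      (ℓ * (ℓ + 2) : ℝ) < p := by
  obtain ⟨k, rfl⟩ := Nat.exists_eq_add_of_le' hℓ
  set d := k + 2 * (k + 2).choose 2
  have hθ : (fun n : ℕ => deltaDim (k + 1) n * (n : ℝ) ^ (-p)) =Θ[atTop]
      fun n => (n : ℝ) ^ ((d : ℝ) - p) := by
    refine ((deltaDim_isTheta k).mul (isTheta_refl _ _)).trans_eventuallyEq ?_
    filter_upwards [eventually_gt_atTop 0] with n hn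
    rw [← Real.rpow_natCast, ← Real.rpow_add (by positivity), sub_eq_add_neg]
  have hd : (d : ℝ) = (k + 1 : ℕ) * ((k + 1 : ℕ) + 2) - 1 := by
    simp only [d, Nat.cast_add, Nat.cast_mul, Nat.cast_choose_two]
    push_cast
    ring
  rw [summable_nat_add_iff 1 (f := fun n : ℕ => deltaDim (k + 1) n * (n : ℝ) ^ (-p)),
    hθ.summable_iff_nat, Real.summable_nat_rpow, hd]
  constructor <;> intro h <;> linarith

/-- (Summability content of Theorem 5.9.)  The series
Σ_{n ≥ 1} δ_n n^{−p} converges iff p > ℓ(ℓ+2); i.e. the operator D̃ on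
L²(SU_q(ℓ+1)) is p-summable iff p > ℓ(ℓ+2). -/
theorem stmt_11 (ℓ : ℕ) (hℓ : 1 ≤ ℓ) (p : ℝ) (hp : 0 < p) :
    Summable (fun n : ℕ => deltaDim ℓ (n + 1) * ((n + 1 : ℕ) : ℝ) ^ (-p)) ↔
      (ℓ * (ℓ + 2) : ℝ) < p :=
  stmt_11_general ℓ hℓ p
end

section
/- Let ℓ ≥ 1 and, for n ∈ ℕ, define δ'_n := Σ_{k=0}^{n} W(μ_{n,k}), where μ_{n,k} : {0, 1, …, ℓ} → ℕ is the weakly decreasing function with μ_{n,k}(0) = n, μ_{n,k}(j) = k for 1 ≤ j ≤ ℓ−1, μ_{n,k}(ℓ) = 0, and W(μ) := ∏_{0 ≤ i < j ≤ ℓ} (μ(i) − μ(j) + j − i)/(j − i). Then for a real number p > 0, the series Σ_{n ≥ 1} δ'_n·n^{−p} converges if and only if p > 2ℓ + 1. -/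
/-- The Young tableau μ_{n,k} = (n, k, k, …, k, 0) : {0, …, ℓ} → ℕ. -/
def muTab (ℓ n k : ℕ) : Fin (ℓ + 1) → ℕ :=
  fun j => if (j : ℕ) = 0 then n else if (j : ℕ) = ℓ then 0 else k

/-- δ'_n = Σ_{k=0}^{n} W(μ_{n,k}). -/
noncomputable def deltaSph (ℓ n : ℕ) : ℝ :=
  ∑ k ∈ Finset.range (n + 1), weylDim ℓ (muTab ℓ n k)

open Finset Filter Asymptotics

theorem Nat.sum_antidiagonal_add_choose_mul_add_choose (a b n : ℕ) :
    ∑ ij ∈ antidiagonal n, (a + ij.1).choose a * (b + ij.2).choose b =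
      (a + b + 1 + n).choose (a + b + 1) := by
  have h := congrArg (fun φ : PowerSeries ℤ => PowerSeries.coeff n φ)
    (congrArg Units.val (PowerSeries.invOneSubPow_add ℤ (a + 1) (b + 1)))
  simp only [Units.val_mul, show a + 1 + (b + 1) = a + b + 1 + 1 by ring,
    PowerSeries.invOneSubPow_val_succ_eq_mk_add_choose, PowerSeries.coeff_mul,
    PowerSeries.coeff_mk] at h
  exact_mod_cast h.symm

theorem prod_range_natCast_add_succ_div_succ (N m : ℕ) :
    ∏ j ∈ range m, ((N + (j + 1) : ℕ) : ℝ) / ((j + 1 : ℕ) : ℝ) = ((m + N).choose m : ℝ) := by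
  induction m with
  | zero => simp
  | succ m ih =>
    have h := Nat.add_one_mul_choose_eq (m + N) m
    rw [prod_range_succ, ih, show m + 1 + N = m + N + 1 by ring, ← mul_div_assoc,
      div_eq_iff (by positivity)]
    exact_mod_cast (by rw [← h]; ring :
      (m + N).choose m * (N + (m + 1)) = (m + N + 1).choose (m + 1) * (m + 1))

noncomputable def weylFactor (g : ℕ → ℕ) (a b : ℕ) : ℝ :=
  if a < b then ((g a : ℝ) - g b + b - a) / (b - a) else 1

theorem weylFactor_of_le {g : ℕ → ℕ} {a b : ℕ} (h : b ≤ a) : weylFactor g a b = 1 :=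
  if_neg (not_lt.2 h)

theorem weylFactor_of_eq {g : ℕ → ℕ} {a b : ℕ} (h : g a = g b) : weylFactor g a b = 1 := by
  unfold weylFactor
  split_ifs with hab
  · have : (a : ℝ) < b := by exact_mod_cast hab
    rw [h, sub_self, zero_add, div_self (by linarith)]
  · rfl

theorem weylDim_eq_prod_range_weylFactor (ℓ : ℕ) (g : ℕ → ℕ) :
    weylDim ℓ (fun j => g j) =
      ∏ a ∈ range (ℓ + 1), ∏ b ∈ range (ℓ + 1), weylFactor g a b := by
  rw [weylDim, ← univ_product_univ, prod_filter, prod_product,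
    ← Fin.prod_univ_eq_prod_range (fun a => ∏ b ∈ range (ℓ + 1), weylFactor g a b)]
  refine prod_congr rfl fun i _ => ?_
  rw [← Fin.prod_univ_eq_prod_range (weylFactor g i)]
  simp only [weylFactor, Fin.lt_def]

def muTabNat (ℓ n k : ℕ) (a : ℕ) : ℕ := if a = 0 then n else if a = ℓ then 0 else k

section muTabNat

variable (m n k : ℕ)

theorem weylFactor_muTabNat_zero_last :
    weylFactor (muTabNat (m + 1) n k) 0 (m + 1) = ((n + m + 1 : ℕ) : ℝ) / (m + 1) := by
  unfold weylFactor muTabNat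
  rw [if_pos (Nat.succ_pos m), if_pos rfl, if_neg (Nat.succ_ne_zero m), if_pos rfl]
  push_cast
  ring

theorem weylFactor_muTabNat_zero_succ {j : ℕ} (hj : j < m) (hk : k ≤ n) :
    weylFactor (muTabNat (m + 1) n k) 0 (j + 1) =
      ((n - k + (j + 1) : ℕ) : ℝ) / ((j + 1 : ℕ) : ℝ) := by
  unfold weylFactor muTabNat
  rw [if_pos (by omega), if_pos rfl, if_neg (by omega), if_neg (by omega)]
  push_cast [hk]
  ring

theorem weylFactor_muTabNat_succ_last {i : ℕ} (hi : i < m) :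
    weylFactor (muTabNat (m + 1) n k) (i + 1) (m + 1) =
      ((k + (m - i) : ℕ) : ℝ) / ((m - i : ℕ) : ℝ) := by
  unfold weylFactor muTabNat
  rw [if_pos (by omega), if_neg (by omega), if_neg (by omega), if_neg (by omega), if_pos rfl]
  push_cast [hi.le]
  ring

theorem prod_weylFactor_muTabNat_succ (i : ℕ) :
    ∏ b ∈ range (m + 2), weylFactor (muTabNat (m + 1) n k) (i + 1) b =
      weylFactor (muTabNat (m + 1) n k) (i + 1) (m + 1) := by
  refine prod_eq_single_of_mem _ (by simp) fun b hb _ => ?_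
  rcases le_or_gt b (i + 1) with hb_le | hb_gt
  · exact weylFactor_of_le hb_le
  · refine weylFactor_of_eq ?_
    rw [mem_range] at hb
    unfold muTabNat
    rw [if_neg (by omega), if_neg (by omega), if_neg (by omega), if_neg (by omega)]

end muTabNat

theorem weylDim_muTab (m n k : ℕ) (hk : k ≤ n) :
    weylDim (m + 1) (muTab (m + 1) n k) =
      ((n + m + 1 : ℕ) : ℝ) / (m + 1) * (m + k).choose m * (m + (n - k)).choose m := by
  have hright : ∏ i ∈ range m, weylFactor (muTabNat (m + 1) n k) (i + 1) (m + 1) =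
      ((m + k).choose m : ℝ) := by
    rw [prod_congr rfl fun i hi => weylFactor_muTabNat_succ_last m n k (mem_range.1 hi),
      ← prod_range_reflect, ← prod_range_natCast_add_succ_div_succ]
    refine prod_congr rfl fun j hj => ?_
    rw [show m - (m - 1 - j) = j + 1 by have := mem_range.1 hj; omega]
  have hleft : ∏ j ∈ range m, weylFactor (muTabNat (m + 1) n k) 0 (j + 1) =
      ((m + (n - k)).choose m : ℝ) := by
    rw [prod_congr rfl fun j hj => weylFactor_muTabNat_zero_succ m n k (mem_range.1 hj) hk,
      prod_range_natCast_add_succ_div_succ]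
  rw [show muTab (m + 1) n k = fun j : Fin (m + 2) => muTabNat (m + 1) n k j from rfl,
    weylDim_eq_prod_range_weylFactor, prod_range_succ',
    prod_congr rfl fun i _ => prod_weylFactor_muTabNat_succ m n k i,
    prod_range_succ, weylFactor_of_le le_rfl, mul_one, hright, prod_range_succ, prod_range_succ',
    weylFactor_of_le le_rfl, mul_one, hleft, weylFactor_muTabNat_zero_last]
  ring

theorem deltaSph_eq_choose (m n : ℕ) :
    deltaSph (m + 1) n =
      ((n + m + 1 : ℕ) : ℝ) / (m + 1) * (2 * m + 1 + n).choose (2 * m + 1) := by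
  have h := Nat.sum_antidiagonal_add_choose_mul_add_choose m m n
  rw [Nat.sum_antidiagonal_eq_sum_range_succ (fun i j => (m + i).choose m * (m + j).choose m),
    ← two_mul] at h
  rw [deltaSph,
    sum_congr rfl fun k hk => weylDim_muTab m n k (Nat.le_of_lt_succ (mem_range.1 hk))]
  simp_rw [mul_assoc, ← mul_sum]
  congr 1
  exact_mod_cast h

theorem isTheta_natCast_add_const (c : ℝ) :
    (fun n : ℕ => (n : ℝ) + c) =Θ[atTop] fun n => (n : ℝ) := by
  have hpos : ∀ᶠ n : ℕ in atTop, (n : ℝ) + c ≠ 0 := by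
    filter_upwards [tendsto_natCast_atTop_atTop.eventually_gt_atTop (-c)] with n hn
    linarith
  exact ((isEquivalent_iff_tendsto_one hpos).2 (tendsto_natCast_div_add_atTop c)).symm.isTheta

theorem isTheta_add_choose (d : ℕ) :
    (fun n : ℕ => ((d + n).choose d : ℝ)) =Θ[atTop] fun n => (n : ℝ) ^ d := by
  have hshift : Tendsto (fun n => d + n) atTop atTop :=
    (tendsto_add_atTop_nat d).congr fun n => add_comm n d
  have hchoose :
      (fun n : ℕ => ((d + n).choose d : ℝ)) =Θ[atTop] fun n => ((n : ℝ) + d) ^ d := by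
    have h : (fun n => ((d + n).choose d : ℝ)) =Θ[atTop] fun n => ((d + n : ℕ) : ℝ) ^ d :=
      ⟨(isTheta_choose d).1.comp_tendsto hshift, (isTheta_choose d).2.comp_tendsto hshift⟩
    simpa only [Nat.cast_add, add_comm (d : ℝ)] using h
  exact hchoose.trans ((isTheta_natCast_add_const d).pow d)

theorem isTheta_deltaSph {ℓ : ℕ} (hℓ : 1 ≤ ℓ) :
    (fun n => deltaSph ℓ n) =Θ[atTop] fun n => (n : ℝ) ^ (2 * ℓ) := by
  obtain ⟨m, rfl⟩ : ∃ m, ℓ = m + 1 := ⟨ℓ - 1, by omega⟩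
  have hlin : (fun n : ℕ => ((n + m + 1 : ℕ) : ℝ) / (m + 1)) =Θ[atTop] fun n => (n : ℝ) := by
    simpa only [div_eq_inv_mul, Nat.cast_add, Nat.cast_one, add_assoc] using
      (isTheta_natCast_add_const (m + 1)).const_mul_left
        (inv_ne_zero (by positivity : (m + 1 : ℝ) ≠ 0))
  simp_rw [deltaSph_eq_choose]
  exact (hlin.mul (isTheta_add_choose (2 * m + 1))).trans_eventuallyEq
    (.of_forall fun n => by ring)

theorem summable_mul_rpow_neg_iff_of_isTheta {f : ℕ → ℝ} {d : ℕ}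
    (hf : f =Θ[atTop] fun n => (n : ℝ) ^ d) (p : ℝ) :
    Summable (fun n => f n * (n : ℝ) ^ (-p)) ↔ (d : ℝ) - p < -1 := by
  rw [← Real.summable_nat_rpow]
  refine ((hf.mul (isTheta_refl _ _)).trans_eventuallyEq ?_).summable_iff_nat
  filter_upwards [eventually_gt_atTop 0] with n hn
  rw [← Real.rpow_natCast, ← Real.rpow_add (by positivity), sub_eq_add_neg]

theorem stmt_13_general (ℓ : ℕ) (hℓ : 1 ≤ ℓ) (p : ℝ) :
    Summable (fun n : ℕ => deltaSph ℓ (n + 1) * ((n + 1 : ℕ) : ℝ) ^ (-p)) ↔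
      (2 * ℓ + 1 : ℝ) < p := by
  rw [show (2 * ℓ + 1 : ℝ) < p ↔ ((2 * ℓ : ℕ) : ℝ) - p < -1 by
    push_cast; constructor <;> intro <;> linarith]
  exact (summable_nat_add_iff 1).trans
    (summable_mul_rpow_neg_iff_of_isTheta (isTheta_deltaSph hℓ) p)

/-- Σ_{n ≥ 1} δ'_n n^{−p} converges iff p > 2ℓ + 1, i.e. the
equivariant Dirac operator D_eq on L²(S_q^{2ℓ+1}) is p-summable iff
p > 2ℓ + 1, so the spectral dimension of S_q^{2ℓ+1} equals 2ℓ + 1. -/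
theorem stmt_13 (ℓ : ℕ) (hℓ : 1 ≤ ℓ) (p : ℝ) (hp : 0 < p) :
    Summable (fun n : ℕ => deltaSph ℓ (n + 1) * ((n + 1 : ℕ) : ℝ) ^ (-p)) ↔
      (2 * ℓ + 1 : ℝ) < p :=
  stmt_13_general ℓ hℓ p
end
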